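/- Let $\Phi$ be a solution of the Seiberg-Witten equations on a compact Riemannian 4-manifold satisfying the pointwise Weitzenböck identity $0 = 2\Delta|\Phi|^2 + 4|\nabla\Phi|^2 + s|\Phi|^2 + |\Phi|^4$, where $s \geq 0$ is the scalar curvature. Then integrating over $M$ gives $\int_M |\Phi|^4 \, d\mu \leq 0$, and hence $\Phi \equiv 0$. -/
import Mathlib


open MeasureTheory

/-- Abstract version of the Seiberg–Witten vanishing argument: if `f = |Φ|²` is a
continuous nonnegative function on a compact manifold satisfying the pointwise
Weitzenböck identity `0 = 2Δf + p + s·f + f²` with `p = 4|∇Φ|² ≥ 0` and scalar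
curvature `s ≥ 0`, and the Laplacian integrates to zero, then `∫ f² = 0` and
hence `f ≡ 0`. -/
theorem sw_vanishing {M : Type*} [TopologicalSpace M] [CompactSpace M]
    [MeasurableSpace M] [BorelSpace M] (μ : Measure M) [IsFiniteMeasure μ]
    [μ.IsOpenPosMeasure]
    (f p s lapf : M → ℝ)
    (hf : Continuous f) (hp : Continuous p) (hs : Continuous s)
    (hlap : Continuous lapf)
    (hdiv : ∫ x, lapf x ∂μ = 0)
    (hp0 : ∀ x, 0 ≤ p x) (hs0 : ∀ x, 0 ≤ s x) (hf0 : ∀ x, 0 ≤ f x)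
    (heq : ∀ x, 0 = 2 * lapf x + p x + s x * f x + (f x) ^ 2) :
    (∫ x, (f x) ^ 2 ∂μ) = 0 ∧ ∀ x, f x = 0 := by
  have hg : Continuous fun x => p x + s x * f x + (f x) ^ 2 := by continuity
  have hgi : Integrable (fun x => p x + s x * f x + (f x) ^ 2) μ := by
    rw [← integrableOn_univ]
    exact hg.continuousOn.integrableOn_compact' isCompact_univ MeasurableSet.univ
  have hint0 : ∫ x, (p x + s x * f x + (f x) ^ 2) ∂μ = 0 := by
    have hfun : (fun x => p x + s x * f x + (f x) ^ 2) = fun x => -(2 * lapf x) := by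
      funext x; have := heq x; linarith
    rw [hfun, integral_neg, integral_const_mul, hdiv]
    ring
  have hnn : ∀ x, 0 ≤ p x + s x * f x + (f x) ^ 2 := fun x =>
    add_nonneg (add_nonneg (hp0 x) (mul_nonneg (hs0 x) (hf0 x))) (sq_nonneg _)
  have haez : (fun x => p x + s x * f x + (f x) ^ 2) =ᵐ[μ] 0 := by
    rwa [integral_eq_zero_iff_of_nonneg (fun x => hnn x) hgi] at hint0
  have heqz : ∀ x, p x + s x * f x + (f x) ^ 2 = 0 := fun x =>
    congrFun (μ.eq_of_ae_eq haez hg continuous_const) x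
  have hfz : ∀ x, f x = 0 := fun x => by
    have h0 := heqz x
    have h1 := hp0 x
    have h2 := mul_nonneg (hs0 x) (hf0 x)
    have h3 : (f x) ^ 2 = 0 := by nlinarith [sq_nonneg (f x)]
    exact pow_eq_zero_iff (n := 2) (by norm_num) |>.mp h3
  refine ⟨by simp [hfz], hfz⟩
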